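/- Let γ, λ ∈ (0,1) with γλ < 1, b_eps ∈ (γ,1], ε > 0, and n ≥ 1. Suppose for all i ≤ n−1 that |Δρ_i| ≤ (6ε/π²) · (b_eps/γ)^{n−i−1} / (γ F_i i²) holds with F_i ≥ 0 and ρ_j ∈ [0,1/b_eps]. Then the follow-on trace difference satisfies |ΔF_n| ≤ Σ_{i=1}^{n−1} (γ/b_eps)^{n−i−1} γ |Δρ_i| F_i ≤ ε, and consequently the emphasis difference |ΔM_n| = (1−λ)|ΔF_n| ≤ ε. -/

import Mathlib

/-!
The differences `Δ_j = Fhat j - F j` obey `Δ_{j+1} = γ ρhat_j Δ_j + γ (ρhat_j - ρ_j) F_j` with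
`|γ ρhat_j| ≤ γ / b_eps`, so unrolling the recursion bounds `|Δ_n|` by the weighted sum. The
assumed bound on `|Δρ_i|` makes its `i`-th term at most `(6ε/π²) / i²`, and `∑ 1/i² ≤ π²/6`.
-/

open Finset

theorem abs_sub_le_sum_of_affine_rec {a b u x y : ℕ → ℝ} {c : ℝ} (hc : ∀ j, |b j| ≤ c)
    (hx : ∀ j, x (j + 1) = u j + a j * x j) (hy : ∀ j, y (j + 1) = u j + b j * y j)
    (h0 : y 0 = x 0) (n : ℕ) :
    |y n - x n| ≤ ∑ i ∈ range n, c ^ (n - i - 1) * |b i - a i| * |x i| := by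
  induction n with
  | zero => simp [h0]
  | succ n ih =>
    have hc0 : 0 ≤ c := (abs_nonneg _).trans (hc 0)
    have hstep : y (n + 1) - x (n + 1) = b n * (y n - x n) + (b n - a n) * x n := by
      rw [hx, hy]; ring
    have hshift : ∑ i ∈ range n, c ^ (n + 1 - i - 1) * |b i - a i| * |x i|
        = c * ∑ i ∈ range n, c ^ (n - i - 1) * |b i - a i| * |x i| := by
      rw [mul_sum]
      refine sum_congr rfl fun i hi => ?_
      rw [show n + 1 - i - 1 = n - i - 1 + 1 by have := mem_range.mp hi; omega, pow_succ]
      ring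
    calc |y (n + 1) - x (n + 1)|
        ≤ |b n| * |y n - x n| + |b n - a n| * |x n| := by
          rw [hstep, ← abs_mul, ← abs_mul]; exact abs_add_le _ _
      _ ≤ c * ∑ i ∈ range n, c ^ (n - i - 1) * |b i - a i| * |x i| + |b n - a n| * |x n| := by
          gcongr
          exact hc n
      _ = ∑ i ∈ range (n + 1), c ^ (n + 1 - i - 1) * |b i - a i| * |x i| := by
          rw [sum_range_succ, hshift, show n + 1 - n - 1 = 0 by omega, pow_zero, one_mul]

theorem sum_one_div_sq_le_pi_sq_div_six (s : Finset ℕ) :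
    ∑ i ∈ s, 1 / (i : ℝ) ^ 2 ≤ Real.pi ^ 2 / 6 :=
  sum_le_hasSum s (fun _ _ => by positivity) hasSum_zeta_two

theorem mul_abs_mul_le_of_abs_le_div {γ d F K : ℝ} (hγ : 0 < γ) (hF : 0 ≤ F) (hK : 0 ≤ K)
    (hd : |d| ≤ K / (γ * F)) : γ * |d| * F ≤ K := by
  rcases hF.eq_or_lt with rfl | hF
  · simpa using hK
  · calc γ * |d| * F ≤ γ * (K / (γ * F)) * F := by gcongr
      _ = K := by field_simp

theorem abs_sub_follow_on_le {γ b : ℝ} {ρ ρhat F Fhat : ℕ → ℝ} (hγ : 0 ≤ γ)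
    (hρhat : ∀ j, 0 ≤ ρhat j ∧ ρhat j ≤ 1 / b) (hF : ∀ i, 0 ≤ F i)
    (hrec : ∀ j, F (j + 1) = 1 + γ * ρ j * F j)
    (hrechat : ∀ j, Fhat (j + 1) = 1 + γ * ρhat j * Fhat j)
    (h0 : Fhat 0 = F 0) (hρ0 : ρhat 0 = ρ 0) (n : ℕ) :
    |Fhat n - F n| ≤
      ∑ i ∈ Icc 1 (n - 1), (γ / b) ^ (n - i - 1) * γ * |ρhat i - ρ i| * F i := by
  have hc : ∀ j, |γ * ρhat j| ≤ γ / b := fun j => by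
    rw [abs_of_nonneg (mul_nonneg hγ (hρhat j).1), div_eq_mul_one_div]
    exact mul_le_mul_of_nonneg_left (hρhat j).2 hγ
  refine (abs_sub_le_sum_of_affine_rec (u := fun _ => 1) hc hrec hrechat h0 n).trans_eq ?_
  rw [← sum_subset (s₁ := Icc 1 (n - 1))]
  · refine sum_congr rfl fun i _ => ?_
    rw [← mul_sub, abs_mul, abs_of_nonneg hγ, abs_of_nonneg (hF i), mul_assoc _ γ]
  · intro i hi
    simp only [mem_Icc, mem_range] at hi ⊢
    omega
  · intro i hi hi'
    obtain rfl : i = 0 := by simp only [mem_Icc, mem_range] at hi hi'; omega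
    simp [hρ0]

theorem sum_pow_mul_abs_mul_le {γ r K : ℝ} {d F : ℕ → ℝ} {k : ℕ → ℕ} {s : Finset ℕ}
    (hγ : 0 < γ) (hr : 0 < r) (hK : 0 ≤ K) (hF : ∀ i, 0 ≤ F i)
    (hd : ∀ i ∈ s, |d i| ≤ K * r⁻¹ ^ k i / (γ * F i * (i : ℝ) ^ 2)) :
    ∑ i ∈ s, r ^ k i * γ * |d i| * F i ≤ K * (Real.pi ^ 2 / 6) := by
  have hterm : ∀ i ∈ s, r ^ k i * γ * |d i| * F i ≤ K * (1 / (i : ℝ) ^ 2) := by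
    intro i hi
    calc r ^ k i * γ * |d i| * F i = r ^ k i * (γ * |d i| * F i) := by ring
      _ ≤ r ^ k i * (K * r⁻¹ ^ k i / (i : ℝ) ^ 2) := by
          gcongr
          refine mul_abs_mul_le_of_abs_le_div hγ (hF i) (by positivity) ?_
          convert hd i hi using 1
          ring
      _ = K * (1 / (i : ℝ) ^ 2) := by
          rw [inv_pow]
          field_simp
  calc ∑ i ∈ s, r ^ k i * γ * |d i| * F i
      ≤ ∑ i ∈ s, K * (1 / (i : ℝ) ^ 2) := sum_le_sum hterm
    _ = K * ∑ i ∈ s, 1 / (i : ℝ) ^ 2 := (mul_sum ..).symm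
    _ ≤ K * (Real.pi ^ 2 / 6) := by gcongr; exact sum_one_div_sq_le_pi_sq_div_six s

theorem emphasis_difference_eps_bound_general
    (γ lam b_eps ε : ℝ) (n : ℕ)
    (hγ : 0 < γ ∧ γ < 1) (hlam : 0 < lam ∧ lam < 1)
    (hb : γ < b_eps ∧ b_eps ≤ 1) (hε : 0 < ε)
    (ρ ρhat F Fhat : ℕ → ℝ)
    (hρhat : ∀ j, 0 ≤ ρhat j ∧ ρhat j ≤ 1 / b_eps)
    (hFnonneg : ∀ i, 0 ≤ F i)
    (hF0 : F 0 = 1) (hFhat0 : Fhat 0 = 1)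
    (hFrec : ∀ j, 1 ≤ j → F j = 1 + γ * ρ (j - 1) * F (j - 1))
    (hFhatrec : ∀ j, 1 ≤ j → Fhat j = 1 + γ * ρhat (j - 1) * Fhat (j - 1))
    (hΔρ : ∀ i ≤ n - 1,
      |ρhat i - ρ i| ≤
        (6 * ε / Real.pi ^ 2) * (b_eps / γ) ^ (n - i - 1) / (γ * F i * (i : ℝ) ^ 2)) :
    |Fhat n - F n| ≤
        (∑ i ∈ Finset.Icc 1 (n - 1),
          (γ / b_eps) ^ (n - i - 1) * γ * |ρhat i - ρ i| * F i) ∧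
    (∑ i ∈ Finset.Icc 1 (n - 1),
        (γ / b_eps) ^ (n - i - 1) * γ * |ρhat i - ρ i| * F i) ≤ ε ∧
    |(1 - lam) * (Fhat n - F n)| ≤ ε := by
  obtain ⟨hγ0, -⟩ := hγ
  -- the bound on `|Δρ_0|` has `0 ^ 2` in its denominator, so it is `0`
  have hρ0 : ρhat 0 = ρ 0 := by simpa [sub_eq_zero] using hΔρ 0 (Nat.zero_le _)
  have htrace : |Fhat n - F n| ≤ _ :=
    abs_sub_follow_on_le hγ0.le hρhat hFnonneg
      (fun j => by simpa using hFrec (j + 1) (by omega))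
      (fun j => by simpa using hFhatrec (j + 1) (by omega)) (by rw [hF0, hFhat0]) hρ0 n
  have hsum :
      ∑ i ∈ Icc 1 (n - 1), (γ / b_eps) ^ (n - i - 1) * γ * |ρhat i - ρ i| * F i ≤ ε := by
    refine (sum_pow_mul_abs_mul_le (K := 6 * ε / Real.pi ^ 2) hγ0 (div_pos hγ0 (hγ0.trans hb.1))
      (by positivity) hFnonneg fun i hi => ?_).trans_eq (by field_simp)
    rw [inv_div]
    exact hΔρ i (mem_Icc.mp hi).2
  have hlam' : |1 - lam| ≤ 1 := abs_le.mpr ⟨by linarith, by linarith⟩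
  refine ⟨htrace, hsum, ?_⟩
  rw [abs_mul]
  exact (mul_le_of_le_one_left (abs_nonneg _) hlam').trans (htrace.trans hsum)

theorem emphasis_difference_eps_bound
    (γ lam b_eps ε : ℝ) (n : ℕ)
    (hγ : 0 < γ ∧ γ < 1) (hlam : 0 < lam ∧ lam < 1) (hγlam : γ * lam < 1)
    (hb : γ < b_eps ∧ b_eps ≤ 1) (hε : 0 < ε) (hn : 1 ≤ n)
    (ρ ρhat F Fhat : ℕ → ℝ)
    (hρ : ∀ j, 0 ≤ ρ j ∧ ρ j ≤ 1 / b_eps)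
    (hρhat : ∀ j, 0 ≤ ρhat j ∧ ρhat j ≤ 1 / b_eps)
    (hFnonneg : ∀ i, 0 ≤ F i)
    (hF0 : F 0 = 1) (hFhat0 : Fhat 0 = 1)
    (hFrec : ∀ j, 1 ≤ j → F j = 1 + γ * ρ (j - 1) * F (j - 1))
    (hFhatrec : ∀ j, 1 ≤ j → Fhat j = 1 + γ * ρhat (j - 1) * Fhat (j - 1))
    (hΔρ : ∀ i ≤ n - 1,
      |ρhat i - ρ i| ≤
        (6 * ε / Real.pi ^ 2) * (b_eps / γ) ^ (n - i - 1) / (γ * F i * (i : ℝ) ^ 2)) :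
    |Fhat n - F n| ≤
        (∑ i ∈ Finset.Icc 1 (n - 1),
          (γ / b_eps) ^ (n - i - 1) * γ * |ρhat i - ρ i| * F i) ∧
    (∑ i ∈ Finset.Icc 1 (n - 1),
        (γ / b_eps) ^ (n - i - 1) * γ * |ρhat i - ρ i| * F i) ≤ ε ∧
    |(1 - lam) * (Fhat n - F n)| ≤ ε :=
  emphasis_difference_eps_bound_general γ lam b_eps ε n hγ hlam hb hε ρ ρhat F Fhat hρhat hFnonneg
    hF0 hFhat0 hFrec hFhatrec hΔρ
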